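/- arXiv:1110.3639 — 8 statements merged into one kernel-verified Lean document; each statement's English description precedes it below -/
import Mathlib

section
/- Let G be a simple graph and let G_(1) be the graph obtained from G by attaching to each vertex v a new pendant vertex v' joined only to v. Then Z(G_(1); t, -1) = (t-1)^{n_G} · Z(G; t, 1), where n_G = |V(G)|. -/
/-!
Split a vertex set of `G₍₁₎` into its base part `A ⊆ V` and its pendant part `B ⊆ V`. The edges
it induces, together with those induced by its complement, are the edges of `G` inside `A` or
inside `Aᶜ`, plus one pendant edge for each vertex whose two copies lie on the same side. For fixed
`A` the sum over `B` therefore factorises over the vertices: `v ∈ A` contributes `y t + 1` and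
`v ∉ A` contributes `y + t`. Hence
`Z(G₍₁₎; t, y) = ∑_A t^(e(A) + e(Aᶜ)) (y (y t + 1))^|A| (y + t)^|Aᶜ|`,
and at `y = -1` both `y (y t + 1)` and `y + t` equal `t - 1`.
-/

open Finset

/-- The set of edges of `G` contained in the vertex subset `S`. -/
def edgeIn {V : Type*} [Fintype V] [DecidableEq V] (G : SimpleGraph V) [DecidableRel G.Adj]
    (S : Finset V) : Finset (Sym2 V) :=
  G.edgeFinset.filter (· ∈ S.sym2)

/-- The bivariate Ising polynomial `Z(G;t,y)` evaluated at `t, y`. -/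
def Zbi {V : Type*} [Fintype V] [DecidableEq V] (G : SimpleGraph V) [DecidableRel G.Adj]
    (t y : ℚ) : ℚ :=
  ∑ S : Finset V, t ^ ((edgeIn G S).card + (edgeIn G Sᶜ).card) * y ^ S.card

/-- The graph `G₍₁₎`: attach to each vertex `v` of `G` a new pendant vertex `(v, true)`
joined only to `(v, false) = v`. -/
def pendant {V : Type*} (G : SimpleGraph V) : SimpleGraph (V × Bool) where
  Adj a b := (a.2 = false ∧ b.2 = false ∧ G.Adj a.1 b.1) ∨ (a.1 = b.1 ∧ a.2 ≠ b.2)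
  symm := by
    constructor
    rintro ⟨u, bu⟩ ⟨v, bv⟩ (⟨h1, h2, h3⟩ | ⟨h1, h2⟩)
    · exact Or.inl ⟨h2, h1, h3.symm⟩
    · exact Or.inr ⟨h1.symm, h2.symm⟩
  loopless := by
    constructor
    rintro ⟨u, bu⟩ (⟨_, _, h3⟩ | ⟨_, h2⟩)
    · exact G.ne_of_adj h3 rfl
    · exact h2 rfl

instance {V : Type*} [DecidableEq V] (G : SimpleGraph V) [DecidableRel G.Adj] :
    DecidableRel (pendant G).Adj := fun a b =>
  inferInstanceAs (Decidable ((a.2 = false ∧ b.2 = false ∧ G.Adj a.1 b.1) ∨ (a.1 = b.1 ∧ a.2 ≠ b.2)))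

section

variable {V : Type*} [Fintype V] [DecidableEq V]

def finsetProdBoolEquiv : Finset V × Finset V ≃ Finset (V × Bool) where
  toFun p := p.1 ×ˢ {false} ∪ p.2 ×ˢ {true}
  invFun S := (({v | (v, false) ∈ S} : Finset V), ({v | (v, true) ∈ S} : Finset V))
  left_inv p := by ext <;> simp
  right_inv S := by ext ⟨v, b⟩; cases b <;> simp

@[simp]
lemma mem_finsetProdBoolEquiv {A B : Finset V} {v : V} {b : Bool} :
    (v, b) ∈ finsetProdBoolEquiv (A, B) ↔ v ∈ cond b B A := by
  cases b <;> simp [finsetProdBoolEquiv]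

lemma compl_finsetProdBoolEquiv (A B : Finset V) :
    (finsetProdBoolEquiv (A, B))ᶜ = finsetProdBoolEquiv (Aᶜ, Bᶜ) := by
  ext ⟨v, b⟩; cases b <;> simp

lemma card_finsetProdBoolEquiv (A B : Finset V) :
    #(finsetProdBoolEquiv (A, B)) = #A + #B := by
  rw [finsetProdBoolEquiv, Equiv.coe_fn_mk,
    card_union_of_disjoint (disjoint_product.2 (.inr (by simp))), card_product, card_product,
    card_singleton, card_singleton, mul_one, mul_one]

theorem Finset.sum_pow_card_inter_mul_pow {R : Type*} [CommSemiring R] (A : Finset V) (t y : R) :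
    ∑ B : Finset V, t ^ (#(A ∩ B) + #(Aᶜ ∩ Bᶜ)) * y ^ #B =
      (y * t + 1) ^ #A * (y + t) ^ #Aᶜ := by
  have term (B : Finset V) : t ^ (#(A ∩ B) + #(Aᶜ ∩ Bᶜ)) * y ^ #B =
      (∏ v ∈ B, y * if v ∈ A then t else 1) * ∏ v ∈ univ \ B, if v ∈ Aᶜ then t else 1 := by
    rw [prod_mul_distrib, prod_ite_mem, prod_ite_mem, ← compl_eq_univ_sdiff, prod_const,
      prod_const, prod_const, inter_comm B, inter_comm Bᶜ, pow_add]
    ring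
  calc _ = ∏ v : V, ((y * if v ∈ A then t else 1) + if v ∈ Aᶜ then t else 1) := by
        rw [prod_add, powerset_univ]; exact sum_congr rfl fun B _ ↦ term B
    _ = ∏ v : V, if v ∈ A then y * t + 1 else y + t := by
        refine prod_congr rfl fun v _ ↦ ?_; by_cases hv : v ∈ A <;> simp [hv]
    _ = _ := by
        rw [prod_ite, filter_mem_eq_inter, filter_notMem_eq_sdiff, univ_inter,
          ← compl_eq_univ_sdiff, prod_const, prod_const]

variable (G : SimpleGraph V) [DecidableRel G.Adj]

lemma edgeIn_pendant (A B : Finset V) :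
    edgeIn (pendant G) (finsetProdBoolEquiv (A, B)) =
      (edgeIn G A).image (Sym2.map (·, false)) ∪
        (A ∩ B).image fun v ↦ s((v, false), (v, true)) := by
  ext e
  induction e using Sym2.ind with
  | _ x y =>
    obtain ⟨u, bu⟩ := x
    obtain ⟨v, bv⟩ := y
    simp only [edgeIn, mem_filter, SimpleGraph.mem_edgeFinset, SimpleGraph.mem_edgeSet,
      mk_mem_sym2_iff, mem_union, mem_image, Sym2.exists, Sym2.map_mk, Sym2.eq_iff, Prod.mk.injEq,
      mem_inter, mem_finsetProdBoolEquiv]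
    cases bu <;> cases bv <;> simp [pendant] <;> grind [SimpleGraph.Adj.symm]

lemma card_edgeIn_pendant (A B : Finset V) :
    #(edgeIn (pendant G) (finsetProdBoolEquiv (A, B))) = #(edgeIn G A) + #(A ∩ B) := by
  have base_inj : Function.Injective (Sym2.map fun v : V ↦ (v, false)) :=
    Sym2.map.injective fun _ _ h ↦ congrArg Prod.fst h
  have pendant_inj : Function.Injective fun v : V ↦ s((v, false), (v, true)) := by
    intro u v h; simpa using h
  have disjoint : Disjoint ((edgeIn G A).image (Sym2.map (·, false)))
      ((A ∩ B).image fun v ↦ s((v, false), (v, true))) := by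
    simp only [disjoint_left, mem_image, not_exists, not_and]
    rintro _ ⟨e, -, rfl⟩ v - h
    induction e using Sym2.ind
    simp at h
  rw [edgeIn_pendant, card_union_of_disjoint disjoint, card_image_of_injective _ base_inj,
    card_image_of_injective _ pendant_inj]

theorem Zbi_pendant_eq_sum (t y : ℚ) :
    Zbi (pendant G) t y = ∑ A : Finset V,
      t ^ (#(edgeIn G A) + #(edgeIn G Aᶜ)) * (y * (y * t + 1)) ^ #A * (y + t) ^ #Aᶜ := by
  rw [Zbi, ← finsetProdBoolEquiv.sum_comp, Fintype.sum_prod_type]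
  refine sum_congr rfl fun A _ ↦ ?_
  have split_term (B : Finset V) :
      t ^ (#(edgeIn (pendant G) (finsetProdBoolEquiv (A, B))) +
          #(edgeIn (pendant G) (finsetProdBoolEquiv (A, B))ᶜ)) * y ^ #(finsetProdBoolEquiv (A, B)) =
        t ^ (#(edgeIn G A) + #(edgeIn G Aᶜ)) * y ^ #A * (t ^ (#(A ∩ B) + #(Aᶜ ∩ Bᶜ)) * y ^ #B) := by
    rw [compl_finsetProdBoolEquiv, card_edgeIn_pendant, card_edgeIn_pendant,
      card_finsetProdBoolEquiv]
    ring
  rw [sum_congr rfl fun B _ ↦ split_term B, ← mul_sum, sum_pow_card_inter_mul_pow, mul_pow]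
  ring

end

theorem Zbi_pendant {V : Type*} [Fintype V] [DecidableEq V] (G : SimpleGraph V)
    [DecidableRel G.Adj] (t : ℚ) :
    Zbi (pendant G) t (-1) = (t - 1) ^ Fintype.card V * Zbi G t 1 := by
  rw [Zbi_pendant_eq_sum, Zbi, mul_sum]
  refine sum_congr rfl fun A _ ↦ ?_
  rw [← card_add_card_compl A]
  ring
end

section
/- Let H be a finite set of positive integers, and let S_H be the graph obtained from the disjoint union of stars S_h (h ∈ H) together with a new vertex c, by joining c to the center of each star S_h. Then Z(S_H; {c}, ∅; t, y) = y · Π_{h∈H} ( y·t·(y·t+1)^h + (y+t)^h ) and Z(S_H; ∅, {c}; t, y) = Π_{h∈H} ( y·(y·t+1)^h + t·(y+t)^h ). -/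
open Finset

/-- The restricted bivariate Ising polynomial `Z(G;B,C;t,y)`: the sum ranges over
all `S` with `B ⊆ S ⊆ V(G) ∖ C`. -/
def ZbiBC {V : Type*} [Fintype V] [DecidableEq V] (G : SimpleGraph V) [DecidableRel G.Adj]
    (B C : Finset V) (t y : ℚ) : ℚ :=
  ∑ S ∈ univ.filter (fun S : Finset V => B ⊆ S ∧ Disjoint S C),
    t ^ ((edgeIn G S).card + (edgeIn G Sᶜ).card) * y ^ S.card

instance fromRel.decidableRel {V : Type*} [DecidableEq V] (r : V → V → Prop) [DecidableRel r] :
    DecidableRel (SimpleGraph.fromRel r).Adj := fun a b =>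
  inferInstanceAs (Decidable (a ≠ b ∧ (r a b ∨ r b a)))

/-- Vertices of the graph `S_H`: `none` is the global center `cent(H)`;
`some ⟨h, none⟩` is the center of the star `S_h`; `some ⟨h, some i⟩` is a leaf of `S_h`. -/
abbrev SHVertex (H : Finset ℕ) : Type :=
  Option ((h : {x // x ∈ H}) × Option (Fin h.1))

/-- Underlying (one-directional) adjacency of `S_H`: the global center is joined to each
star center, and each star center is joined to the leaves of its own star. -/
def shRel (H : Finset ℕ) : SHVertex H → SHVertex H → Bool
  | none, some ⟨_, none⟩ => true
  | some ⟨h, none⟩, some ⟨h', some _⟩ => h.1 == h'.1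
  | _, _ => false

/-- The graph `S_H`, built from the disjoint union of the stars `S_h`, `h ∈ H`, and a new
vertex `cent(H) = none` joined to the center of each star. -/
def SHGraph (H : Finset ℕ) : SimpleGraph (SHVertex H) :=
  SimpleGraph.fromRel (fun a b => shRel H a b = true)

instance (H : Finset ℕ) : DecidableRel (SHGraph H).Adj := fromRel.decidableRel _

/-!
`S_H` is a tree rooted at `c`, so its edges are in bijection with the non-root vertices, each
joined to its parent. Once the side of `c` is fixed, a vertex set `S` amounts to an
independent choice of its trace on each star, and both the number of monochromatic edges and
`|S|` split as sums over the stars; the sum over `S` therefore factorises over `h ∈ H`. Within one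
star, fixing the side of its centre makes the leaves independent, and the binomial theorem gives
`(y t + 1) ^ h` (centre in `S`) or `(y + t) ^ h` (centre outside `S`).
-/

section SubsetSums

variable {α ι M : Type*} [Fintype α] [DecidableEq α] [AddCommMonoid M]

lemma sum_filter_none_mem (f : Finset (Option α) → M) :
    ∑ S with none ∈ S, f S = ∑ L : Finset α, f (insertNone L) := by
  have hinv : ∀ S ∈ ({S | none ∈ S} : Finset (Finset (Option α))), insertNone (eraseNone S) = S :=
    fun S hS => by rw [insertNone_eraseNone, insert_eq_of_mem (mem_filter.1 hS).2]
  exact sum_nbij' eraseNone insertNone (by simp) (by simp) hinv (by simp)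
    (fun S hS => by rw [hinv S hS])

lemma sum_filter_none_notMem (f : Finset (Option α) → M) :
    ∑ S with none ∉ S, f S = ∑ L : Finset α, f (L.map .some) := by
  have hinv : ∀ S ∈ ({S | none ∉ S} : Finset (Finset (Option α))), (eraseNone S).map .some = S :=
    fun S hS => by rw [map_some_eraseNone, erase_eq_of_notMem (mem_filter.1 hS).2]
  exact sum_nbij' eraseNone (map .some) (by simp) (by simp) hinv (by simp)
    (fun S hS => by rw [hinv S hS])

lemma sum_finset_sigma [Fintype ι] [DecidableEq ι] {κ : ι → Type*} [∀ i, Fintype (κ i)]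
    [∀ i, DecidableEq (κ i)] (f : Finset (Σ i, κ i) → M) :
    ∑ S, f S = ∑ g : ∀ i, Finset (κ i), f (univ.sigma g) := by
  have hinv : ∀ S : Finset (Σ i, κ i), univ.sigma (fun i => {a | ⟨i, a⟩ ∈ S}) = S :=
    fun S => by ext ⟨i, a⟩; simp
  refine sum_nbij' (fun S i => {a | ⟨i, a⟩ ∈ S}) (univ.sigma ·) (by simp) (by simp)
    (fun S _ => ?_) (fun g _ => ?_) (fun S _ => ?_)
  · exact hinv S
  · ext i a; simp
  · rw [hinv S]

end SubsetSums

section MonochromaticEdges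

variable {V ι : Type*} [Fintype V] [DecidableEq V] [Fintype ι] {G : SimpleGraph V}
  [DecidableRel G.Adj] {u v : ι → V}

lemma card_edgeIn_eq_of_edgeFinset_eq_image (hinj : Function.Injective fun i => s(u i, v i))
    (hG : G.edgeFinset = univ.image fun i => s(u i, v i)) (S : Finset V) :
    #(edgeIn G S) = #{i | u i ∈ S ∧ v i ∈ S} := by
  rw [edgeIn, hG, filter_image, card_image_of_injective _ hinj]
  simp only [mk_mem_sym2_iff]

lemma card_edgeIn_add_card_edgeIn_compl (hinj : Function.Injective fun i => s(u i, v i))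
    (hG : G.edgeFinset = univ.image fun i => s(u i, v i)) (S : Finset V) :
    #(edgeIn G S) + #(edgeIn G Sᶜ) = #{i | u i ∈ S ↔ v i ∈ S} := by
  classical
  rw [card_edgeIn_eq_of_edgeFinset_eq_image hinj hG, card_edgeIn_eq_of_edgeFinset_eq_image hinj hG,
    ← card_union_of_disjoint (disjoint_filter.2 fun _ _ h h' => by simp_all), ← filter_or]
  congr 1
  ext i
  simp only [mem_filter, mem_compl]
  tauto

end MonochromaticEdges

namespace SHGraph

variable {H : Finset ℕ}

abbrev StarVertex (H : Finset ℕ) : Type := (h : {x // x ∈ H}) × Option (Fin h.1)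

def parent : StarVertex H → SHVertex H
  | ⟨_, none⟩ => none
  | ⟨h, some _⟩ => some ⟨h, none⟩

lemma parent_eq_none_of_parent_eq_some {x y : StarVertex H} (hxy : parent x = some y) :
    parent y = none := by
  rcases x with ⟨h, _ | i⟩
  · cases hxy
  · cases hxy; rfl

lemma edge_parent_injective : Function.Injective fun x : StarVertex H => s(parent x, some x) := by
  intro x y hxy
  rcases Sym2.eq_iff.1 hxy with ⟨-, h⟩ | ⟨hx, hy⟩
  · exact Option.some_injective _ h
  · simp [parent_eq_none_of_parent_eq_some hx] at hy

lemma adj_parent (x : StarVertex H) : (SHGraph H).Adj (parent x) (some x) := by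
  rcases x with ⟨h, _ | i⟩ <;> simp [SHGraph, shRel, parent]

lemma exists_parent_of_shRel {a b : SHVertex H} (hab : shRel H a b = true) :
    ∃ x, parent x = a ∧ some x = b := by
  rcases a with _ | ⟨h, _ | i⟩ <;> rcases b with _ | ⟨h', _ | i'⟩ <;> simp [shRel] at hab
  · exact ⟨⟨h', none⟩, rfl, rfl⟩
  · obtain rfl := hab
    exact ⟨⟨h, some i'⟩, rfl, rfl⟩

lemma edgeFinset_eq_image_parent :
    (SHGraph H).edgeFinset = univ.image fun x => s(parent x, some x) := by
  ext e
  induction e using Sym2.inductionOn with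
  | hf a b =>
    simp only [SimpleGraph.mem_edgeFinset, SimpleGraph.mem_edgeSet, mem_image, mem_univ, true_and]
    constructor
    · rintro ⟨-, hab | hba⟩
      · obtain ⟨x, rfl, rfl⟩ := exists_parent_of_shRel hab
        exact ⟨x, rfl⟩
      · obtain ⟨x, rfl, rfl⟩ := exists_parent_of_shRel hba
        exact ⟨x, Sym2.eq_swap⟩
    · rintro ⟨x, hx⟩
      rw [← SimpleGraph.mem_edgeSet, ← hx]
      exact adj_parent x

def starPart (S : Finset (SHVertex H)) (h : {x // x ∈ H}) : Finset (Option (Fin h.1)) :=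
  {x | some ⟨h, x⟩ ∈ S}

lemma starPart_insertNone (g : ∀ h : {x // x ∈ H}, Finset (Option (Fin h.1))) (h) :
    starPart (insertNone (univ.sigma g)) h = g h := by
  ext; simp [starPart]

lemma starPart_map_some (g : ∀ h : {x // x ∈ H}, Finset (Option (Fin h.1))) (h) :
    starPart ((univ.sigma g).map .some) h = g h := by
  ext; simp [starPart]

/-- The monochromatic edges contributed by one star with vertex set `T ⊆ Option (Fin n)` (centre
`none`): its `n` leaf edges and the edge from its centre to the root, which lies in `S` iff `b`. -/
def starMonoCount {n : ℕ} (b : Prop) [Decidable b] (T : Finset (Option (Fin n))) : ℕ :=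
  (if (b ↔ none ∈ T) then 1 else 0) + #{i | none ∈ T ↔ some i ∈ T}

lemma card_edgeIn_add_card_edgeIn_compl_eq_sum (S : Finset (SHVertex H)) :
    #(edgeIn (SHGraph H) S) + #(edgeIn (SHGraph H) Sᶜ)
      = ∑ h, starMonoCount (none ∈ S) (starPart S h) := by
  rw [card_edgeIn_add_card_edgeIn_compl edge_parent_injective edgeFinset_eq_image_parent,
    card_filter, ← univ_sigma_univ, sum_sigma]
  refine sum_congr rfl fun h _ => ?_
  rw [Fintype.sum_option, starMonoCount]
  simp only [parent, starPart, mem_filter, mem_univ, true_and, card_filter]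
  congr

lemma card_eq_sum_card_starPart (S : Finset (SHVertex H)) :
    #S = (if none ∈ S then 1 else 0) + ∑ h, #(starPart S h) := by
  rw [← filter_univ_mem S, card_filter, Fintype.sum_option, ← univ_sigma_univ, sum_sigma]
  simp [starPart, sum_boole]

lemma weight_eq_prod_starPart (t y : ℚ) (S : Finset (SHVertex H)) :
    t ^ (#(edgeIn (SHGraph H) S) + #(edgeIn (SHGraph H) Sᶜ)) * y ^ #S
      = (if none ∈ S then y else 1)
          * ∏ h, t ^ starMonoCount (none ∈ S) (starPart S h) * y ^ #(starPart S h) := by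
  rw [card_edgeIn_add_card_edgeIn_compl_eq_sum, card_eq_sum_card_starPart, pow_add,
    prod_mul_distrib, prod_pow_eq_pow_sum, prod_pow_eq_pow_sum]
  split_ifs <;> ring

lemma starMonoCount_insertNone {n : ℕ} (b : Prop) [Decidable b] (L : Finset (Fin n)) :
    starMonoCount b (insertNone L) = (if b then 1 else 0) + #L := by
  simp [starMonoCount]

lemma starMonoCount_map_some {n : ℕ} (b : Prop) [Decidable b] (L : Finset (Fin n)) :
    starMonoCount b (L.map .some) = (if b then 0 else 1) + (n - #L) := by
  simp [starMonoCount, filter_notMem_eq_sdiff, card_univ_sdiff]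

lemma sum_starMonoCount (t y : ℚ) (n : ℕ) (b : Prop) [Decidable b] :
    ∑ T : Finset (Option (Fin n)), t ^ starMonoCount b T * y ^ #T
      = (if b then t else 1) * y * (y * t + 1) ^ n + (if b then 1 else t) * (y + t) ^ n := by
  rw [← sum_filter_add_sum_filter_not _ (none ∈ ·), sum_filter_none_mem, sum_filter_none_notMem,
    ← Fin.sum_pow_mul_eq_add_pow, ← Fin.sum_pow_mul_eq_add_pow, mul_sum, mul_sum]
  congr 1 <;> refine sum_congr rfl fun L _ => ?_
  · rw [starMonoCount_insertNone, card_insertNone]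
    split_ifs <;> ring
  · rw [starMonoCount_map_some, card_map]
    split_ifs <;> ring

lemma sum_filter_none_mem_weight (t y : ℚ) :
    ∑ S : Finset (SHVertex H) with none ∈ S,
        t ^ (#(edgeIn (SHGraph H) S) + #(edgeIn (SHGraph H) Sᶜ)) * y ^ #S
      = y * ∏ h ∈ H, (y * t * (y * t + 1) ^ h + (y + t) ^ h) := by
  calc _ = y * ∏ h : {x // x ∈ H}, ∑ T : Finset (Option (Fin h.1)),
        t ^ starMonoCount True T * y ^ #T := by
        rw [Fintype.prod_sum, mul_sum, sum_filter_none_mem, sum_finset_sigma]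
        refine sum_congr rfl fun g _ => ?_
        simp only [weight_eq_prod_starPart, starPart_insertNone]
        simp
    _ = y * ∏ h ∈ H, (y * t * (y * t + 1) ^ h + (y + t) ^ h) := by
        rw [← prod_coe_sort H]
        simp only [sum_starMonoCount, if_true]
        ring_nf

lemma sum_filter_none_notMem_weight (t y : ℚ) :
    ∑ S : Finset (SHVertex H) with none ∉ S,
        t ^ (#(edgeIn (SHGraph H) S) + #(edgeIn (SHGraph H) Sᶜ)) * y ^ #S
      = ∏ h ∈ H, (y * (y * t + 1) ^ h + t * (y + t) ^ h) := by
  calc _ = ∏ h : {x // x ∈ H}, ∑ T : Finset (Option (Fin h.1)),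
        t ^ starMonoCount False T * y ^ #T := by
        rw [Fintype.prod_sum, sum_filter_none_notMem, sum_finset_sigma]
        refine sum_congr rfl fun g _ => ?_
        simp only [weight_eq_prod_starPart, starPart_map_some]
        simp
    _ = ∏ h ∈ H, (y * (y * t + 1) ^ h + t * (y + t) ^ h) := by
        rw [← prod_coe_sort H]
        simp only [sum_starMonoCount, if_false]
        ring_nf

end SHGraph

theorem Zbi_SH_general (H : Finset ℕ) (t y : ℚ) :
    ZbiBC (SHGraph H) {none} ∅ t y =
        y * ∏ h ∈ H, (y * t * (y * t + 1) ^ h + (y + t) ^ h) ∧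
    ZbiBC (SHGraph H) ∅ {none} t y =
        ∏ h ∈ H, (y * (y * t + 1) ^ h + t * (y + t) ^ h) := by
  constructor
  · rw [ZbiBC, filter_congr (q := (none ∈ ·)) (by simp), SHGraph.sum_filter_none_mem_weight]
  · rw [ZbiBC, filter_congr (q := (none ∉ ·)) (by simp), SHGraph.sum_filter_none_notMem_weight]

theorem Zbi_SH (H : Finset ℕ) (hH : ∀ h ∈ H, 0 < h) (t y : ℚ) :
    ZbiBC (SHGraph H) {none} ∅ t y =
        y * ∏ h ∈ H, (y * t * (y * t + 1) ^ h + (y + t) ^ h) ∧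
    ZbiBC (SHGraph H) ∅ {none} t y =
        ∏ h ∈ H, (y * (y * t + 1) ^ h + t * (y + t) ^ h) :=
  Zbi_SH_general H t y
end

section
/- For h ≥ 1, let L_h be the graph obtained from a path P_{h+1} with h edges by adding two new vertices tr_1, tr_2 each adjacent to all path vertices; let hd denote one fixed endpoint of the path. Define b_{B,C}(h) = Z(L_h; B(h), C(h); t, 1) for a partition (B,C) of {tr_1, tr_2, hd}. Then b_{{tr_1,hd},{tr_2}}(h) = (t²+t)^h · t. (By symmetry the same formula holds for b_{{tr_2,hd},{tr_1}}(h), b_{{tr_1},{tr_2,hd}}(h) and b_{{tr_2},{tr_1,hd}}(h).) -/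
open Finset

/-- One-directional adjacency of the graph `L_h`: path vertices `inl i` are consecutive,
and each of the two apex vertices `inr 0 = tr₁`, `inr 1 = tr₂` is joined to every
path vertex. -/
def lRel (h : ℕ) : Fin (h + 1) ⊕ Fin 2 → Fin (h + 1) ⊕ Fin 2 → Bool
  | .inl i, .inl j => (i : ℕ) + 1 == (j : ℕ)
  | .inl _, .inr _ => true
  | _, _ => false

/-- The graph `L_h`: a path `p₀, …, p_h` (with `h` edges) together with two apex vertices
`tr₁(h) = inr 0` and `tr₂(h) = inr 1`, each adjacent to all path vertices.
The head `hd(h)` is the endpoint `inl (Fin.last h)`. -/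
def Lgraph (h : ℕ) : SimpleGraph (Fin (h + 1) ⊕ Fin 2) :=
  SimpleGraph.fromRel (fun a b => lRel h a b = true)

instance (h : ℕ) : DecidableRel (Lgraph h).Adj := fromRel.decidableRel _

/-! With `hd, tr₁ ∈ S` and `tr₂ ∉ S`, write `P` for the path vertices in `S`. Every path vertex
is joined to exactly one apex on its own side, so the apex edges always contribute `h + 1`
monochromatic edges, while a path edge is monochromatic iff its endpoints agree about `P`.
Since `hd ∈ P`, the set `P` is recovered from its set of agreeing path edges, and that set is an
arbitrary subset of the `h` path edges. Hence the sum is `t ^ (h + 1) * (1 + t) ^ h`. -/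

namespace Fin

variable {n : ℕ}

def agreements (P : Finset (Fin (n + 1))) : Finset (Fin n) :=
  {j | j.castSucc ∈ P ↔ j.succ ∈ P}

/-- Walking down from the head `last n ∈ P`, membership flips exactly across the path edges
outside the agreement set. -/
def signOfAgreements (e : Finset (Fin n)) : Fin (n + 1) → Bool :=
  reverseInduction true fun j b => b == decide (j ∈ e)

def ofAgreements (e : Finset (Fin n)) : Finset (Fin (n + 1)) :=
  {i | signOfAgreements e i}

lemma mem_ofAgreements {e : Finset (Fin n)} {i : Fin (n + 1)} :
    i ∈ ofAgreements e ↔ signOfAgreements e i = true := by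
  simp [ofAgreements]

lemma last_mem_ofAgreements (e : Finset (Fin n)) : last n ∈ ofAgreements e := by
  rw [mem_ofAgreements, signOfAgreements, reverseInduction_last]

lemma castSucc_mem_ofAgreements_iff (e : Finset (Fin n)) (j : Fin n) :
    j.castSucc ∈ ofAgreements e ↔ (j.succ ∈ ofAgreements e ↔ j ∈ e) := by
  rw [mem_ofAgreements, mem_ofAgreements, signOfAgreements, reverseInduction_castSucc,
    ← signOfAgreements]
  cases signOfAgreements e j.succ <;> simp

lemma agreements_ofAgreements (e : Finset (Fin n)) : agreements (ofAgreements e) = e := by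
  ext j
  simp only [agreements, mem_filter, mem_univ, true_and, castSucc_mem_ofAgreements_iff]
  tauto

lemma ofAgreements_agreements {P : Finset (Fin (n + 1))} (hP : last n ∈ P) :
    ofAgreements (agreements P) = P := by
  ext i
  induction i using reverseInduction with
  | last => simp [hP, last_mem_ofAgreements]
  | cast j ih =>
    rw [castSucc_mem_ofAgreements_iff, ih]
    simp only [agreements, mem_filter, mem_univ, true_and]
    tauto

theorem sum_pow_card_agreements {R : Type*} [CommSemiring R] (t : R) :
    ∑ P ∈ ({P | last n ∈ P} : Finset (Finset (Fin (n + 1)))), t ^ #(agreements P) =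
      (t + 1) ^ n := by
  rw [← sum_pow_mul_eq_add_pow t 1]
  simp only [one_pow, mul_one]
  refine sum_nbij' agreements ofAgreements (fun _ _ => mem_univ _) (fun e _ => ?_)
    (fun P hP => ofAgreements_agreements (mem_filter.1 hP).2) (fun e _ => agreements_ofAgreements e)
    (fun _ _ => rfl)
  simpa using last_mem_ofAgreements e

end Fin

lemma Finset.mk_mem_sym2_or_mk_mem_compl_sym2_iff {α : Type*} [Fintype α] [DecidableEq α]
    (S : Finset α) (a b : α) : s(a, b) ∈ S.sym2 ∨ s(a, b) ∈ Sᶜ.sym2 ↔ (a ∈ S ↔ b ∈ S) := by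
  simp only [mk_mem_sym2_iff, mem_compl]
  tauto

lemma card_edgeIn_add_card_edgeIn_compl_s7 {V : Type*} [Fintype V] [DecidableEq V]
    (G : SimpleGraph V) [DecidableRel G.Adj] (S : Finset V) :
    #(edgeIn G S) + #(edgeIn G Sᶜ) = #{e ∈ G.edgeFinset | e ∈ S.sym2 ∨ e ∈ Sᶜ.sym2} := by
  rw [filter_or, card_union_of_disjoint]
  · rfl
  refine disjoint_filter.2 fun e _ hS hSc => ?_
  exact mem_compl.1 (mem_sym2_iff.1 hSc _ e.out_fst_mem) (mem_sym2_iff.1 hS _ e.out_fst_mem)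

lemma Finset.card_filter_mem_iff_mem {α β : Type*} [Fintype α] [Fintype β] [DecidableEq α]
    [DecidableEq β] (P : Finset α) (Q : Finset β) :
    #{p : α × β | p.1 ∈ P ↔ p.2 ∈ Q} = #P * #Q + #Pᶜ * #Qᶜ := by
  have hsplit : ({p : α × β | p.1 ∈ P ↔ p.2 ∈ Q} : Finset _) = P ×ˢ Q ∪ Pᶜ ×ˢ Qᶜ := by
    ext p
    simp only [mem_filter, mem_univ, true_and, mem_union, mem_product, mem_compl]
    tauto
  rw [hsplit, card_union_of_disjoint, card_product, card_product]
  exact disjoint_product.2 (.inl disjoint_compl_right)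

namespace Lgraph

variable {h : ℕ}

lemma adj_inl_inl {i j : Fin (h + 1)} :
    (Lgraph h).Adj (.inl i) (.inl j) ↔ (i : ℕ) + 1 = j ∨ (j : ℕ) + 1 = i := by
  simp only [Lgraph, SimpleGraph.fromRel_adj, lRel, beq_iff_eq, ne_eq, Sum.inl.injEq]
  exact and_iff_right_of_imp fun hij hii => by subst hii; omega

lemma adj_inl_inr (i : Fin (h + 1)) (k : Fin 2) : (Lgraph h).Adj (.inl i) (.inr k) := by
  simp [Lgraph, lRel]

lemma not_adj_inr_inr (k l : Fin 2) : ¬(Lgraph h).Adj (.inr k) (.inr l) := by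
  simp [Lgraph, lRel]

def pathEdge (h : ℕ) : Fin h ↪ Sym2 (Fin (h + 1) ⊕ Fin 2) where
  toFun j := s(.inl j.castSucc, .inl j.succ)
  inj' i j hij := by
    simp only [Sym2.eq_iff, Sum.inl.injEq, Fin.ext_iff, Fin.val_castSucc, Fin.val_succ] at hij
    exact Fin.ext (by omega)

def apexEdge (h : ℕ) : Fin (h + 1) × Fin 2 ↪ Sym2 (Fin (h + 1) ⊕ Fin 2) where
  toFun p := s(.inl p.1, .inr p.2)
  inj' p q hpq := by
    simp only [Sym2.eq_iff, Sum.inl.injEq, Sum.inr.injEq, reduceCtorEq, and_false, or_false] at hpq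
    exact Prod.ext hpq.1 hpq.2

@[simp] lemma pathEdge_apply (j : Fin h) : pathEdge h j = s(.inl j.castSucc, .inl j.succ) := rfl

@[simp] lemma apexEdge_apply (p : Fin (h + 1) × Fin 2) : apexEdge h p = s(.inl p.1, .inr p.2) :=
  rfl

lemma edgeFinset_eq : (Lgraph h).edgeFinset = univ.map (pathEdge h) ∪ univ.map (apexEdge h) := by
  ext e
  induction e using Sym2.ind with
  | _ a b =>
  simp only [SimpleGraph.mem_edgeFinset, SimpleGraph.mem_edgeSet, mem_union, mem_map, mem_univ,
    true_and, pathEdge_apply, apexEdge_apply, Sym2.eq_iff]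
  rcases a with i | k <;> rcases b with j | l
  · simp only [adj_inl_inl, Sum.inl.injEq, Fin.ext_iff, Fin.val_castSucc, Fin.val_succ,
      reduceCtorEq, and_false, or_false, exists_false]
    constructor
    · rintro (hij | hji)
      · exact ⟨⟨i, by omega⟩, .inl ⟨rfl, by omega⟩⟩
      · exact ⟨⟨j, by omega⟩, .inr ⟨rfl, by omega⟩⟩
    · rintro ⟨m, hm | hm⟩ <;> omega
  · simp [adj_inl_inr]
  · simp [(Lgraph h).adj_comm, adj_inl_inr]
  · simp [not_adj_inr_inr]

lemma card_monochromatic (S : Finset (Fin (h + 1) ⊕ Fin 2)) :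
    #{e ∈ (Lgraph h).edgeFinset | e ∈ S.sym2 ∨ e ∈ Sᶜ.sym2} =
      #{j : Fin h | .inl j.castSucc ∈ S ↔ .inl j.succ ∈ S} +
        #{p : Fin (h + 1) × Fin 2 | .inl p.1 ∈ S ↔ .inr p.2 ∈ S} := by
  rw [edgeFinset_eq, filter_union, card_union_of_disjoint, filter_map, filter_map, card_map,
    card_map]
  · simp only [Function.comp_def, pathEdge_apply, apexEdge_apply,
      mk_mem_sym2_or_mk_mem_compl_sym2_iff]
  · refine disjoint_filter_filter (disjoint_left.2 ?_)
    simp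

lemma card_edgeIn_disjSum_add_card_edgeIn_compl (P : Finset (Fin (h + 1))) :
    #(edgeIn (Lgraph h) (P.disjSum {0})) + #(edgeIn (Lgraph h) (P.disjSum {0})ᶜ) =
      #(Fin.agreements P) + (h + 1) := by
  rw [card_edgeIn_add_card_edgeIn_compl_s7, card_monochromatic]
  simp only [inl_mem_disjSum, inr_mem_disjSum]
  have hcompl : #({0} : Finset (Fin 2))ᶜ = 1 := rfl
  rw [card_filter_mem_iff_mem, card_singleton, hcompl, mul_one, mul_one, card_add_card_compl,
    Fintype.card_fin]
  rfl

lemma ZbiBC_eq_sum_agreements (t y : ℚ) :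
    ZbiBC (Lgraph h) {.inl (Fin.last h), .inr 0} {.inr 1} t y =
      ∑ P ∈ ({P | Fin.last h ∈ P} : Finset (Finset (Fin (h + 1)))),
        t ^ (#(Fin.agreements P) + (h + 1)) * y ^ (#P + 1) := by
  symm
  refine sum_nbij' (·.disjSum {0}) toLeft (fun P hP => ?_) (fun S hS => ?_) (fun P _ => ?_)
    (fun S hS => ?_) (fun P _ => ?_)
  · simpa [insert_subset_iff] using hP
  · simp_all [insert_subset_iff]
  · exact toLeft_disjSum
  · simp only [mem_filter, mem_univ, true_and, insert_subset_iff, singleton_subset_iff,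
      disjoint_singleton_right] at hS
    ext (i | k)
    · simp
    · fin_cases k <;> simp [hS.1.2, hS.2]
  · rw [card_edgeIn_disjSum_add_card_edgeIn_compl, card_disjSum, card_singleton]

end Lgraph

theorem Zbi_L_one_tr_general (h : ℕ) (t : ℚ) :
    ZbiBC (Lgraph h) {Sum.inl (Fin.last h), Sum.inr 0} {Sum.inr 1} t 1 =
      (t ^ 2 + t) ^ h * t := by
  simp only [Lgraph.ZbiBC_eq_sum_agreements, one_pow, mul_one, pow_add, ← sum_mul,
    Fin.sum_pow_card_agreements]
  rw [sq, ← mul_add_one, mul_pow]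
  ring

theorem Zbi_L_one_tr (h : ℕ) (hh : 1 ≤ h) (t : ℚ) :
    ZbiBC (Lgraph h) {Sum.inl (Fin.last h), Sum.inr 0} {Sum.inr 1} t 1 =
      (t ^ 2 + t) ^ h * t :=
  Zbi_L_one_tr_general h t
end

section
/- With the notation of the L_h graphs, the sequences a(h) = b_{{tr_1,tr_2,hd},∅}(h) and c(h) = b_{{tr_1,tr_2},{hd}}(h) satisfy the mutual linear recurrence a(h) = t³·a(h-1) + t²·c(h-1) and c(h) = a(h-1) + t·c(h-1), with initial conditions a(0)=t², c(0)=1. -/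
open Finset

/-- `a(h) = b_{{tr₁,tr₂,hd},∅}(h) = Z(L_h; {tr₁(h),tr₂(h),hd(h)}, ∅; t, 1)`. -/
def aSeq (t : ℚ) (h : ℕ) : ℚ :=
  ZbiBC (Lgraph h) {Sum.inr 0, Sum.inr 1, Sum.inl (Fin.last h)} ∅ t 1

/-- `c(h) = b_{{tr₁,tr₂},{hd}}(h) = Z(L_h; {tr₁(h),tr₂(h)}, {hd(h)}; t, 1)`. -/
def cSeq (t : ℚ) (h : ℕ) : ℚ :=
  ZbiBC (Lgraph h) {Sum.inr 0, Sum.inr 1} {Sum.inl (Fin.last h)} t 1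

/-!
`L_{h+1}` is `L_h` with one new vertex `hd(h+1)`, whose neighbours are `hd(h)`, `tr₁` and `tr₂`.
A vertex set `S` of `L_{h+1}` is its trace `T` on `L_h` together with the side of `hd(h+1)`, and
the exponent `|E(S)| + |E(S̄)|` counts the edges not cut by `S`: it is the one of `T` plus the
number of neighbours of `hd(h+1)` on its own side. When `tr₁, tr₂ ∈ S` that number is `3` or `2`
if `hd(h+1) ∈ S`, and `0` or `1` if `hd(h+1) ∉ S`, according as `hd(h) ∈ T` or not; sorting the
sum over `T` by this case gives the two recurrences.
-/

section

variable {V W : Type*} {f : V ↪ W} {w : W}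

lemma apply_ne_of_range_eq (hrange : Set.range f = {w}ᶜ) (x : V) : f x ≠ w := by
  simpa [hrange] using Set.mem_range_self (f := f) x

variable [Fintype V] [Fintype W] [DecidableEq W]

lemma univ_eq_insert_map_univ (hrange : Set.range f = {w}ᶜ) :
    (univ : Finset W) = insert w (univ.map f) := by
  ext v
  by_cases hv : v = w
  · simp [hv]
  · obtain ⟨x, rfl⟩ : v ∈ Set.range f := hrange ▸ hv
    simp

lemma sum_finset_eq_sum_map_add_sum_insert_map {M : Type*} [AddCommMonoid M]
    (hrange : Set.range f = {w}ᶜ) (g : Finset W → M) :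
    ∑ S, g S = ∑ T : Finset V, g (T.map f) + ∑ T : Finset V, g (insert w (T.map f)) := by
  have hw : w ∉ univ.map f := by simp [apply_ne_of_range_eq hrange]
  have hmap : ∀ g' : Finset W → M,
      ∑ S ∈ (univ.map f).powerset, g' S = ∑ T : Finset V, g' (T.map f) := by
    intro g'
    rw [Finset.map_eq_image, Finset.powerset_image, Finset.sum_image, Finset.powerset_univ]
    · simp only [Finset.map_eq_image]
    · exact fun T _ T' _ h => by simpa [← Finset.map_eq_image] using h
  rw [← Finset.powerset_univ, univ_eq_insert_map_univ hrange, Finset.sum_powerset_insert hw,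
    hmap, hmap]

end

section Extension

variable {V W : Type*} [Fintype V] [DecidableEq V] [Fintype W] [DecidableEq W]

lemma mk_mem_edgeIn {G : SimpleGraph V} [DecidableRel G.Adj] {S : Finset V} {a b : V} :
    s(a, b) ∈ edgeIn G S ↔ G.Adj a b ∧ a ∈ S ∧ b ∈ S := by
  simp [edgeIn]

lemma edgeIn_insert (G : SimpleGraph V) [DecidableRel G.Adj] (S : Finset V) (v : V) :
    edgeIn G (insert v S) = (S.filter (G.Adj v)).map (Sym2.mkEmbedding v) ∪ edgeIn G S := by
  ext z
  induction z using Sym2.ind with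
  | _ a b =>
    simp only [mk_mem_edgeIn, Finset.mem_union, Finset.mem_map, Finset.mem_filter,
      Finset.mem_insert, Sym2.mkEmbedding_apply, Sym2.eq_iff]
    constructor
    · rintro ⟨hab, rfl | ha, rfl | hb⟩
      · exact absurd rfl hab.ne
      · exact Or.inl ⟨b, ⟨hb, hab⟩, Or.inl ⟨rfl, rfl⟩⟩
      · exact Or.inl ⟨a, ⟨ha, hab.symm⟩, Or.inr ⟨rfl, rfl⟩⟩
      · exact Or.inr ⟨hab, ha, hb⟩
    · rintro (⟨x, ⟨hx, hvx⟩, ⟨rfl, rfl⟩ | ⟨rfl, rfl⟩⟩ | ⟨hab, ha, hb⟩)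
      · exact ⟨hvx, Or.inl rfl, Or.inr hx⟩
      · exact ⟨hvx.symm, Or.inr hx, Or.inl rfl⟩
      · exact ⟨hab, Or.inr ha, Or.inr hb⟩

lemma card_edgeIn_insert (G : SimpleGraph V) [DecidableRel G.Adj] {S : Finset V} {v : V}
    (hv : v ∉ S) : #(edgeIn G (insert v S)) = #(edgeIn G S) + #(S.filter (G.Adj v)) := by
  rw [edgeIn_insert, Finset.card_union_of_disjoint, Finset.card_map, add_comm]
  rw [Finset.disjoint_left]
  rintro _ he he'
  obtain ⟨x, -, rfl⟩ := Finset.mem_map.mp he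
  exact hv (mk_mem_edgeIn.mp he').2.1

lemma edgeIn_eq_filter_sym2 (G : SimpleGraph V) [DecidableRel G.Adj] (S : Finset V) :
    edgeIn G S = S.sym2.filter (· ∈ G.edgeSet) := by
  ext e
  simp [edgeIn, and_comm]

lemma card_edgeIn_map {G : SimpleGraph V} [DecidableRel G.Adj] {G' : SimpleGraph W}
    [DecidableRel G'.Adj] {f : V ↪ W} (hf : ∀ x y, G'.Adj (f x) (f y) ↔ G.Adj x y)
    (T : Finset V) : #(edgeIn G' (T.map f)) = #(edgeIn G T) := by
  have hedge : ∀ e, f.sym2Map e ∈ G'.edgeSet ↔ e ∈ G.edgeSet := fun e =>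
    Sym2.ind (fun x y => hf x y) e
  rw [edgeIn_eq_filter_sym2, Finset.sym2_map, Finset.filter_map, Finset.card_map,
    edgeIn_eq_filter_sym2]
  exact congrArg card (Finset.filter_congr fun e _ => hedge e)

variable {f : V ↪ W} {w : W}

lemma compl_map_of_range_eq (hrange : Set.range f = {w}ᶜ) (T : Finset V) :
    (T.map f)ᶜ = insert w (Tᶜ.map f) := by
  ext v
  by_cases hv : v = w
  · simp [hv, apply_ne_of_range_eq hrange]
  · obtain ⟨x, rfl⟩ : v ∈ Set.range f := hrange ▸ hv
    simp [hv]

lemma compl_insert_map_of_range_eq (hrange : Set.range f = {w}ᶜ) (T : Finset V) :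
    (insert w (T.map f))ᶜ = Tᶜ.map f := by
  rw [← compl_compl (Tᶜ.map f), compl_map_of_range_eq hrange, compl_compl]

def monoEdgeCount (G : SimpleGraph V) [DecidableRel G.Adj] (S : Finset V) : ℕ :=
  #(edgeIn G S) + #(edgeIn G Sᶜ)

variable {G : SimpleGraph V} [DecidableRel G.Adj] {G' : SimpleGraph W} [DecidableRel G'.Adj]

lemma monoEdgeCount_insert_map (hf : ∀ x y, G'.Adj (f x) (f y) ↔ G.Adj x y)
    (hrange : Set.range f = {w}ᶜ) (T : Finset V) :
    monoEdgeCount G' (insert w (T.map f)) =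
      monoEdgeCount G T + #(T.filter (G'.Adj w ∘ f)) := by
  have hw : w ∉ T.map f := by simp [apply_ne_of_range_eq hrange]
  rw [monoEdgeCount, monoEdgeCount, compl_insert_map_of_range_eq hrange, card_edgeIn_insert _ hw,
    Finset.filter_map, Finset.card_map, card_edgeIn_map hf, card_edgeIn_map hf]
  omega

lemma monoEdgeCount_map (hf : ∀ x y, G'.Adj (f x) (f y) ↔ G.Adj x y)
    (hrange : Set.range f = {w}ᶜ) (T : Finset V) :
    monoEdgeCount G' (T.map f) = monoEdgeCount G T + #(Tᶜ.filter (G'.Adj w ∘ f)) := by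
  have hw : w ∉ Tᶜ.map f := by simp [apply_ne_of_range_eq hrange]
  rw [monoEdgeCount, monoEdgeCount, compl_map_of_range_eq hrange, card_edgeIn_insert _ hw,
    Finset.filter_map, Finset.card_map, card_edgeIn_map hf, card_edgeIn_map hf]
  omega

lemma ZbiBC_insert_map (hf : ∀ x y, G'.Adj (f x) (f y) ↔ G.Adj x y)
    (hrange : Set.range f = {w}ᶜ) (B C : Finset V) (t y : ℚ) :
    ZbiBC G' (insert w (B.map f)) (C.map f) t y =
      y * ∑ T ∈ univ.filter (fun T => B ⊆ T ∧ Disjoint T C),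
        t ^ (monoEdgeCount G T + #(T.filter (G'.Adj w ∘ f))) * y ^ #T := by
  have hw : ∀ T : Finset V, w ∉ T.map f := by simp [apply_ne_of_range_eq hrange]
  rw [ZbiBC, Finset.sum_filter, sum_finset_eq_sum_map_add_sum_insert_map hrange,
    Finset.sum_eq_zero fun T _ => if_neg fun h => hw T (h.1 (Finset.mem_insert_self w _)),
    zero_add, Finset.sum_filter, Finset.mul_sum]
  refine Finset.sum_congr rfl fun T _ => ?_
  simp only [Finset.insert_subset_insert_iff (hw B), Finset.map_subset_map,
    Finset.disjoint_insert_left, Finset.disjoint_map, hw C, not_false_eq_true, true_and]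
  split_ifs
  · rw [← monoEdgeCount, monoEdgeCount_insert_map hf hrange, Finset.card_insert_of_notMem (hw T),
      Finset.card_map, pow_succ]
    ring
  · rw [mul_zero]

lemma ZbiBC_map_insert (hf : ∀ x y, G'.Adj (f x) (f y) ↔ G.Adj x y)
    (hrange : Set.range f = {w}ᶜ) (B C : Finset V) (t y : ℚ) :
    ZbiBC G' (B.map f) (insert w (C.map f)) t y =
      ∑ T ∈ univ.filter (fun T => B ⊆ T ∧ Disjoint T C),
        t ^ (monoEdgeCount G T + #(Tᶜ.filter (G'.Adj w ∘ f))) * y ^ #T := by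
  have hw : ∀ T : Finset V, w ∉ T.map f := by simp [apply_ne_of_range_eq hrange]
  rw [ZbiBC, Finset.sum_filter, sum_finset_eq_sum_map_add_sum_insert_map hrange]
  refine (add_eq_left.mpr (Finset.sum_eq_zero fun T _ => if_neg fun h =>
    Finset.disjoint_left.mp h.2 (Finset.mem_insert_self w _) (Finset.mem_insert_self w _))).trans ?_
  rw [Finset.sum_filter]
  refine Finset.sum_congr rfl fun T _ => ?_
  simp only [Finset.map_subset_map, Finset.disjoint_insert_right, Finset.disjoint_map, hw T,
    not_false_eq_true, true_and]
  split_ifs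
  · rw [← monoEdgeCount, monoEdgeCount_map hf hrange, Finset.card_map]
  · rfl

lemma sum_filter_subset_disjoint_eq_add {M : Type*} [AddCommMonoid M] (B C : Finset V) (v : V)
    (F : Finset V → M) :
    ∑ S ∈ univ.filter (fun S => B ⊆ S ∧ Disjoint S C), F S =
      ∑ S ∈ univ.filter (fun S => insert v B ⊆ S ∧ Disjoint S C), F S +
        ∑ S ∈ univ.filter (fun S => B ⊆ S ∧ Disjoint S (insert v C)), F S := by
  rw [← Finset.sum_filter_add_sum_filter_not _ (v ∈ ·), Finset.filter_filter,
    Finset.filter_filter]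
  congr 2 <;> ext S <;> simp [Finset.insert_subset_iff] <;> tauto

end Extension

namespace Lgraph

def embed (h : ℕ) : Fin (h + 1) ⊕ Fin 2 ↪ Fin (h + 2) ⊕ Fin 2 :=
  Fin.castSuccEmb.sumMap (Function.Embedding.refl _)

lemma adj_embed (h : ℕ) (x y : Fin (h + 1) ⊕ Fin 2) :
    (Lgraph (h + 1)).Adj (embed h x) (embed h y) ↔ (Lgraph h).Adj x y := by
  cases x <;> cases y <;> simp [Lgraph, embed, lRel, Fin.ext_iff]

lemma range_embed (h : ℕ) : Set.range (embed h) = {.inl (Fin.last (h + 1))}ᶜ := by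
  ext (j | k)
  · simp [embed, Fin.exists_castSucc_eq]
  · simp [embed]

lemma adj_last_embed (h : ℕ) (x : Fin (h + 1) ⊕ Fin 2) :
    (Lgraph (h + 1)).Adj (.inl (Fin.last (h + 1))) (embed h x) ↔
      x ∈ ({.inl (Fin.last h), .inr 0, .inr 1} : Finset _) := by
  cases x with
  | inl i => simp [Lgraph, embed, lRel, Fin.ext_iff]; omega
  | inr k => simp [Lgraph, embed, lRel]; omega

lemma filter_adj_last_embed (h : ℕ) (T : Finset (Fin (h + 1) ⊕ Fin 2)) :
    T.filter ((Lgraph (h + 1)).Adj (.inl (Fin.last (h + 1))) ∘ embed h) =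
      T ∩ {.inl (Fin.last h), .inr 0, .inr 1} := by
  ext x
  simp only [Finset.mem_filter, Finset.mem_inter, Function.comp_apply, adj_last_embed]

lemma insert_last_eq (h : ℕ) :
    ({.inr 0, .inr 1, .inl (Fin.last h)} : Finset (Fin (h + 1) ⊕ Fin 2)) =
      insert (.inl (Fin.last h)) {.inr 0, .inr 1} := by
  rw [Finset.pair_comm, Finset.insert_comm]

variable {h : ℕ} {T : Finset (Fin (h + 1) ⊕ Fin 2)}

lemma card_filter_adj_last_embed (h0 : .inr 0 ∈ T) (h1 : .inr 1 ∈ T) :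
    #(T.filter ((Lgraph (h + 1)).Adj (.inl (Fin.last (h + 1))) ∘ embed h)) =
      if .inl (Fin.last h) ∈ T then 3 else 2 := by
  rw [filter_adj_last_embed]
  split_ifs with hlast <;> simp [Finset.inter_insert_of_mem, *]

lemma card_compl_filter_adj_last_embed (h0 : .inr 0 ∈ T) (h1 : .inr 1 ∈ T) :
    #(Tᶜ.filter ((Lgraph (h + 1)).Adj (.inl (Fin.last (h + 1))) ∘ embed h)) =
      if .inl (Fin.last h) ∈ T then 0 else 1 := by
  rw [filter_adj_last_embed]
  split_ifs with hlast <;> simp [Finset.inter_insert_of_notMem, *]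

end Lgraph

open Lgraph in
lemma aSeq_succ (t : ℚ) (h : ℕ) : aSeq t (h + 1) = t ^ 3 * aSeq t h + t ^ 2 * cSeq t h := by
  have hB : ({.inr 0, .inr 1, .inl (Fin.last (h + 1))} : Finset (Fin (h + 2) ⊕ Fin 2)) =
      insert (.inl (Fin.last (h + 1))) (({.inr 0, .inr 1} : Finset _).map (embed h)) := by
    ext x
    simp [embed]
    tauto
  rw [aSeq, hB, ← Finset.map_empty (embed h), ZbiBC_insert_map (adj_embed h) (range_embed h),
    one_mul, sum_filter_subset_disjoint_eq_add _ _ (.inl (Fin.last h)), aSeq, cSeq,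
    insert_last_eq h, ZbiBC, ZbiBC, Finset.mul_sum, Finset.mul_sum]
  congr 1 <;> refine Finset.sum_congr rfl fun T hT => ?_
  · obtain ⟨hlast, h0, h1⟩ : .inl (Fin.last h) ∈ T ∧ .inr 0 ∈ T ∧ .inr 1 ∈ T := by
      simpa [Finset.insert_subset_iff] using hT
    rw [card_filter_adj_last_embed h0 h1, if_pos hlast, pow_add, monoEdgeCount]
    ring
  · obtain ⟨⟨h0, h1⟩, hlast⟩ : (.inr 0 ∈ T ∧ .inr 1 ∈ T) ∧ .inl (Fin.last h) ∉ T := by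
      simpa [Finset.insert_subset_iff] using hT
    rw [card_filter_adj_last_embed h0 h1, if_neg hlast, pow_add, monoEdgeCount]
    ring

open Lgraph in
lemma cSeq_succ (t : ℚ) (h : ℕ) : cSeq t (h + 1) = aSeq t h + t * cSeq t h := by
  have hB : ({.inr 0, .inr 1} : Finset (Fin (h + 2) ⊕ Fin 2)) =
      ({.inr 0, .inr 1} : Finset _).map (embed h) := by
    simp [embed]
  have hC : ({.inl (Fin.last (h + 1))} : Finset (Fin (h + 2) ⊕ Fin 2)) =
      insert (.inl (Fin.last (h + 1))) ((∅ : Finset _).map (embed h)) := by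
    simp
  rw [cSeq, hB, hC, ZbiBC_map_insert (adj_embed h) (range_embed h),
    sum_filter_subset_disjoint_eq_add _ _ (.inl (Fin.last h)), aSeq, cSeq,
    insert_last_eq h, ZbiBC, ZbiBC, Finset.insert_empty, Finset.mul_sum]
  congr 1 <;> refine Finset.sum_congr rfl fun T hT => ?_
  · obtain ⟨hlast, h0, h1⟩ : .inl (Fin.last h) ∈ T ∧ .inr 0 ∈ T ∧ .inr 1 ∈ T := by
      simpa [Finset.insert_subset_iff] using hT
    rw [card_compl_filter_adj_last_embed h0 h1, if_pos hlast, add_zero, monoEdgeCount]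
  · obtain ⟨⟨h0, h1⟩, hlast⟩ : (.inr 0 ∈ T ∧ .inr 1 ∈ T) ∧ .inl (Fin.last h) ∉ T := by
      simpa [Finset.insert_subset_iff] using hT
    rw [card_compl_filter_adj_last_embed h0 h1, if_neg hlast, pow_succ, monoEdgeCount]
    ring

lemma aSeq_zero (t : ℚ) : aSeq t 0 = t ^ 2 := by
  have hfilter : univ.filter (fun S : Finset (Fin 1 ⊕ Fin 2) =>
      {.inr 0, .inr 1, .inl (Fin.last 0)} ⊆ S ∧ Disjoint S ∅) = {univ} := by
    decide
  have hcount : monoEdgeCount (Lgraph 0) univ = 2 := by decide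
  rw [aSeq, ZbiBC, hfilter, Finset.sum_singleton, ← monoEdgeCount, hcount, one_pow, mul_one]

lemma cSeq_zero (t : ℚ) : cSeq t 0 = 1 := by
  have hfilter : univ.filter (fun S : Finset (Fin 1 ⊕ Fin 2) =>
      {.inr 0, .inr 1} ⊆ S ∧ Disjoint S {.inl (Fin.last 0)}) = {{.inr 0, .inr 1}} := by
    decide
  have hcount : monoEdgeCount (Lgraph 0) {.inr 0, .inr 1} = 0 := by decide
  rw [cSeq, ZbiBC, hfilter, Finset.sum_singleton, ← monoEdgeCount, hcount, one_pow, mul_one,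
    pow_zero]

theorem Zbi_L_recurrence (t : ℚ) :
    (aSeq t 0 = t ^ 2 ∧ cSeq t 0 = 1) ∧
    ∀ h : ℕ,
      aSeq t (h + 1) = t ^ 3 * aSeq t h + t ^ 2 * cSeq t h ∧
      cSeq t (h + 1) = aSeq t h + t * cSeq t h :=
  ⟨⟨aSeq_zero t, cSeq_zero t⟩, fun h => ⟨aSeq_succ t h, cSeq_succ t h⟩⟩
end

section
/- Let e ∈ ℚ ∖ {−1, 0, 1} and let a, b, c be positive reals with b ≠ c. Then there exists c₁ ∈ ℕ such that the sequence h(ℓ) = (e·b^ℓ + a^ℓ)/(c^ℓ + e·a^ℓ) is strictly monotone (increasing or decreasing) for ℓ ≥ c₁. In particular, the sequence is eventually injective. -/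
/-!
Write `h ℓ = u ℓ / v ℓ` with `u ℓ = e b^ℓ + a^ℓ` and `v ℓ = c^ℓ + e a^ℓ`. Then
`h (ℓ + 1) - h ℓ = w ℓ / (v (ℓ + 1) v ℓ)`, where
`w ℓ = e (b - c) (bc)^ℓ + e² (b - a) (ab)^ℓ + (a - c) (ac)^ℓ`.
Both `v` and `w` are exponential sums whose dominant term (after merging equal bases) has a nonzero
coefficient, so each has eventually constant sign; hence so does `h (ℓ + 1) - h ℓ`.
-/

open Filter Asymptotics Finset

def EventuallySigned {α : Type*} (l : Filter α) (f : α → ℝ) : Prop :=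
  (∀ᶠ x in l, 0 < f x) ∨ ∀ᶠ x in l, f x < 0

namespace EventuallySigned

variable {α : Type*} {l : Filter α} {f g r : α → ℝ}

lemma congr (hf : EventuallySigned l f) (hfg : f =ᶠ[l] g) : EventuallySigned l g := by
  refine hf.imp (fun hf => ?_) fun hf => ?_
  · filter_upwards [hf, hfg] with x hfx hx using hx ▸ hfx
  · filter_upwards [hf, hfg] with x hfx hx using hx ▸ hfx

lemma div (hf : EventuallySigned l f) (hg : ∀ᶠ x in l, 0 < g x) :
    EventuallySigned l fun x => f x / g x := by
  refine hf.imp (fun hf => ?_) fun hf => ?_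
  · filter_upwards [hf, hg] with x hfx hgx using div_pos hfx hgx
  · filter_upwards [hf, hg] with x hfx hgx using div_neg_of_neg_of_pos hfx hgx

lemma add_isLittleO (hg : EventuallySigned l g) (hr : r =o[l] g) :
    EventuallySigned l fun x => g x + r x := by
  have hsmall := hr.def (c := 1 / 2) (by norm_num)
  refine hg.imp (fun hg => ?_) fun hg => ?_
  · filter_upwards [hg, hsmall] with x hgx hrx
    rw [Real.norm_eq_abs, Real.norm_eq_abs, abs_of_pos hgx] at hrx
    linarith [neg_abs_le (r x)]
  · filter_upwards [hg, hsmall] with x hgx hrx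
    rw [Real.norm_eq_abs, Real.norm_eq_abs, abs_of_neg hgx] at hrx
    linarith [le_abs_self (r x)]

end EventuallySigned

lemma eventuallySigned_const_mul_pow {K X : ℝ} (hK : K ≠ 0) (hX : 0 < X) :
    EventuallySigned atTop fun n : ℕ => K * X ^ n := by
  rcases hK.lt_or_gt with hK | hK
  · exact .inr <| .of_forall fun n => mul_neg_of_neg_of_pos hK (pow_pos hX n)
  · exact .inl <| .of_forall fun n => mul_pos hK (pow_pos hX n)

lemma eventuallySigned_sum_const_mul_pow {ι : Type*} [Fintype ι] [Nonempty ι] {K X : ι → ℝ}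
    (hK : ∀ i, K i ≠ 0) (hX : ∀ i, 0 < X i) (hXinj : Function.Injective X) :
    EventuallySigned atTop fun n : ℕ => ∑ i, K i * X i ^ n := by
  classical
  obtain ⟨i, -, hmax⟩ := univ.exists_max_image X univ_nonempty
  have hrest : (fun n : ℕ => ∑ j ∈ univ.erase i, K j * X j ^ n) =o[atTop]
      fun n => K i * X i ^ n := by
    refine IsLittleO.fun_sum fun j hj => ?_
    have hlt : X j < X i := (hmax j (mem_univ j)).lt_of_ne (hXinj.ne (ne_of_mem_erase hj))
    exact ((isLittleO_pow_pow_of_lt_left (hX j).le hlt).const_mul_left (K j)).const_mul_right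
      (hK i)
  exact ((eventuallySigned_const_mul_pow (hK i) (hX i)).add_isLittleO hrest).congr
    (.of_forall fun n => add_sum_erase univ (fun j => K j * X j ^ n) (mem_univ i))

lemma eventuallySigned_sub_div_succ {u v : ℕ → ℝ} (hv : EventuallySigned atTop v)
    (hw : EventuallySigned atTop fun n => u (n + 1) * v n - u n * v (n + 1)) :
    EventuallySigned atTop fun n => u (n + 1) / v (n + 1) - u n / v n := by
  have hvv : ∀ᶠ n in atTop, 0 < v (n + 1) * v n := by
    rcases hv with hv | hv
    · filter_upwards [tendsto_add_atTop_nat 1 hv, hv] with n h₁ h₀ using mul_pos h₁ h₀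
    · filter_upwards [tendsto_add_atTop_nat 1 hv, hv] with n h₁ h₀
      using mul_pos_of_neg_of_neg h₁ h₀
  refine (hw.div hvv).congr ?_
  filter_upwards [hvv] with n hn
  rw [eq_comm, div_sub_div _ _ (left_ne_zero_of_mul hn.ne') (right_ne_zero_of_mul hn.ne'),
    mul_comm (v (n + 1))]

lemma exists_strictMonoOn_or_strictAntiOn_Ici {f : ℕ → ℝ}
    (hf : EventuallySigned atTop fun n => f (n + 1) - f n) :
    ∃ N, StrictMonoOn f (Set.Ici N) ∨ StrictAntiOn f (Set.Ici N) := by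
  rcases hf with hf | hf <;> obtain ⟨N, hN⟩ := eventually_atTop.1 hf
  · exact ⟨N, .inl <| strictMonoOn_of_lt_add_one Set.ordConnected_Ici
      fun n _ hn _ => sub_pos.1 (hN n hn)⟩
  · exact ⟨N, .inr <| strictAntiOn_of_add_one_lt Set.ordConnected_Ici
      fun n _ hn _ => sub_neg.1 (hN n hn)⟩

lemma eventuallySigned_pow_add_mul_pow {E a c : ℝ} (ha : 0 < a) (hc : 0 < c) (hE₀ : E ≠ 0)
    (hE₁ : E ≠ -1) : EventuallySigned atTop fun n : ℕ => c ^ n + E * a ^ n := by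
  rcases eq_or_ne a c with rfl | hac
  · refine (eventuallySigned_const_mul_pow (K := 1 + E) ?_ ha).congr (.of_forall fun n => by ring)
    contrapose! hE₁
    linarith
  · refine (eventuallySigned_sum_const_mul_pow (K := ![1, E]) (X := ![c, a]) ?_ ?_ ?_).congr
      (.of_forall fun n => by simp [Fin.sum_univ_two])
    · simp [Fin.forall_fin_two, hE₀]
    · simp [Fin.forall_fin_two, ha, hc]
    · simp only [Matrix.vecCons, Fin.cons_injective_iff]
      simpa [hac.symm] using Function.injective_of_subsingleton _

lemma eventuallySigned_crossDiff {E a b c : ℝ} (ha : 0 < a) (hb : 0 < b) (hc : 0 < c)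
    (hbc : b ≠ c) (hE₀ : E ≠ 0) (hE₁ : E ≠ -1) :
    EventuallySigned atTop fun n : ℕ =>
      E * (b - c) * (b * c) ^ n + E ^ 2 * (b - a) * (a * b) ^ n + (a - c) * (a * c) ^ n := by
  have hE₁' : 1 + E ≠ 0 := by
    contrapose! hE₁
    linarith
  rcases eq_or_ne a c with rfl | hac
  · refine (eventuallySigned_const_mul_pow (K := E * (1 + E) * (b - a)) ?_ (mul_pos ha hb)).congr
      (.of_forall fun n => by ring)
    exact mul_ne_zero (mul_ne_zero hE₀ hE₁') (sub_ne_zero.2 hbc)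
  rcases eq_or_ne a b with rfl | hab
  · refine (eventuallySigned_const_mul_pow (K := (1 + E) * (a - c)) ?_ (mul_pos ha hc)).congr
      (.of_forall fun n => by ring)
    exact mul_ne_zero hE₁' (sub_ne_zero.2 hac)
  have hbc_ab : b * c ≠ a * b := mul_comm a b ▸ ((mul_right_injective₀ hb.ne').ne hac).symm
  have hbc_ac : b * c ≠ a * c := (mul_left_injective₀ hc.ne').ne hab.symm
  have hab_ac : a * b ≠ a * c := (mul_right_injective₀ ha.ne').ne hbc
  refine (eventuallySigned_sum_const_mul_pow (K := ![E * (b - c), E ^ 2 * (b - a), a - c])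
    (X := ![b * c, a * b, a * c]) ?_ ?_ ?_).congr
      (.of_forall fun n => by simp [Fin.sum_univ_three, add_assoc])
  · simp [Fin.forall_fin_succ, hE₀, sub_eq_zero, hbc, hab.symm, hac]
  · simp [Fin.forall_fin_succ, ha, hb, hc]
  · simp only [Matrix.vecCons, Fin.cons_injective_iff]
    simpa [hbc_ab, hbc_ac, hab_ac] using Function.injective_of_subsingleton _

theorem growth_lemma (e : ℚ) (he : e ≠ -1 ∧ e ≠ 0 ∧ e ≠ 1)
    (a b c : ℝ) (ha : 0 < a) (hb : 0 < b) (hc : 0 < c) (hbc : b ≠ c) :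
    ∃ c₁ : ℕ,
      (∀ m n : ℕ, c₁ ≤ m → m < n →
          ((e : ℝ) * b ^ m + a ^ m) / (c ^ m + (e : ℝ) * a ^ m) <
            ((e : ℝ) * b ^ n + a ^ n) / (c ^ n + (e : ℝ) * a ^ n)) ∨
      (∀ m n : ℕ, c₁ ≤ m → m < n →
          ((e : ℝ) * b ^ n + a ^ n) / (c ^ n + (e : ℝ) * a ^ n) <
            ((e : ℝ) * b ^ m + a ^ m) / (c ^ m + (e : ℝ) * a ^ m)) := by
  have hE₀ : (e : ℝ) ≠ 0 := by exact_mod_cast he.2.1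
  have hE₁ : (e : ℝ) ≠ -1 := by exact_mod_cast he.1
  have hstep := eventuallySigned_sub_div_succ (u := fun n => (e : ℝ) * b ^ n + a ^ n)
    (eventuallySigned_pow_add_mul_pow ha hc hE₀ hE₁)
    ((eventuallySigned_crossDiff ha hb hc hbc hE₀ hE₁).congr (.of_forall fun n => by ring))
  obtain ⟨N, hmono | hanti⟩ := exists_strictMonoOn_or_strictAntiOn_Ici
    (f := fun n => ((e : ℝ) * b ^ n + a ^ n) / (c ^ n + (e : ℝ) * a ^ n)) hstep
  · exact ⟨N, .inl fun m n hm hmn => hmono hm (hm.trans hmn.le) hmn⟩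
  · exact ⟨N, .inr fun m n hm hmn => hanti hm (hm.trans hmn.le) hmn⟩
end

section
/- Let γ, δ ∈ ℚ with δ ∉ {−1,0,1}, γ ∉ {−1,0,1} and γ ≠ −δ. Define for a finite set H of positive integers g_y,H(γ,δ) = δ · Π_{h∈H} (δγ(δγ+1)^h + (δ+γ)^h)/(δ(δγ+1)^h + γ(δ+γ)^h). Then, with u₁ = 1/(γ²−1), u₂ = γ/(δ(γ²−1)), w = (δ+γ)/(δγ+1), one has u₁, u₂ ≠ 0, w ∉ {−1,0,1}, and the identity g_y,H(γ,δ) = (δ/γ^{|H|}) · Π_{h∈H} (1 + 1/(u₁ + u₂·w^h)) holds whenever all denominators involved are nonzero. -/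
/-! With `x = w ^ h = B / A` for `A = (δγ + 1) ^ h`, `B = (δ + γ) ^ h`, each factor of
`g_y,H` is the Möbius transformation `(δγ + x) / (δ + γx)`, and
`1 + 1 / (u₁ + u₂ x) = γ (δγ + x) / (δ + γx)` because `u₁ + u₂ x = (δ + γx) / (δ (γ² - 1))`. -/

open Finset

section Field

variable {K : Type*} [Field K]

lemma sq_sub_one_ne_zero {γ : K} (h₁ : γ ≠ 1) (h₂ : γ ≠ -1) : γ ^ 2 - 1 ≠ 0 := by
  rw [sub_ne_zero, Ne, sq_eq_one_iff]
  exact not_or_intro h₁ h₂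

lemma div_ne_one_of_ne_one {γ δ : K} (hδ : δ ≠ 1) (hγ : γ ≠ 1) (hw : δ * γ + 1 ≠ 0) :
    (δ + γ) / (δ * γ + 1) ≠ 1 := by
  rw [Ne, div_eq_one_iff_eq hw]
  intro h
  have : (δ - 1) * (γ - 1) = 0 := by linear_combination -h
  rcases mul_eq_zero.1 this with h' | h'
  · exact hδ (sub_eq_zero.1 h')
  · exact hγ (sub_eq_zero.1 h')

lemma div_ne_neg_one_of_ne_neg_one {γ δ : K} (hδ : δ ≠ -1) (hγ : γ ≠ -1)
    (hw : δ * γ + 1 ≠ 0) : (δ + γ) / (δ * γ + 1) ≠ -1 := by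
  rw [Ne, div_eq_iff hw]
  intro h
  have : (δ + 1) * (γ + 1) = 0 := by linear_combination h
  rcases mul_eq_zero.1 this with h' | h'
  · exact hδ (eq_neg_of_add_eq_zero_left h')
  · exact hγ (eq_neg_of_add_eq_zero_left h')

lemma one_add_one_div_affine_eq {γ δ x : K} (hδ : δ ≠ 0) (hγ : γ ^ 2 - 1 ≠ 0)
    (hx : δ + γ * x ≠ 0) :
    1 + 1 / (1 / (γ ^ 2 - 1) + γ / (δ * (γ ^ 2 - 1)) * x) = γ * (δ * γ + x) / (δ + γ * x) := by
  have hu : 1 / (γ ^ 2 - 1) + γ / (δ * (γ ^ 2 - 1)) * x = (δ + γ * x) / (δ * (γ ^ 2 - 1)) := by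
    field_simp
  rw [hu, one_div_div]
  field_simp
  ring

lemma factor_eq_inv_mul_one_add_one_div {γ δ A B : K} (hγ0 : γ ≠ 0) (hδ : δ ≠ 0)
    (hγ : γ ^ 2 - 1 ≠ 0) (hA : A ≠ 0) (hden : δ * A + γ * B ≠ 0) :
    (δ * γ * A + B) / (δ * A + γ * B) =
      γ⁻¹ * (1 + 1 / (1 / (γ ^ 2 - 1) + γ / (δ * (γ ^ 2 - 1)) * (B / A))) := by
  have hx : δ + γ * (B / A) ≠ 0 := by
    rw [show δ + γ * (B / A) = (δ * A + γ * B) / A by field_simp]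
    exact div_ne_zero hden hA
  rw [one_add_one_div_affine_eq hδ hγ hx]
  field_simp

end Field

theorem g_y_rewrite (γ δ : ℚ)
    (hδ : δ ≠ -1 ∧ δ ≠ 0 ∧ δ ≠ 1) (hγ : γ ≠ -1 ∧ γ ≠ 0 ∧ γ ≠ 1)
    (hγδ : γ ≠ -δ) (hw : δ * γ + 1 ≠ 0) :
    (1 / (γ ^ 2 - 1) ≠ 0) ∧
    (γ / (δ * (γ ^ 2 - 1)) ≠ 0) ∧
    ((δ + γ) / (δ * γ + 1) ≠ -1 ∧ (δ + γ) / (δ * γ + 1) ≠ 0 ∧ (δ + γ) / (δ * γ + 1) ≠ 1) ∧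
    ∀ H : Finset ℕ, (∀ h ∈ H, 0 < h) →
      (∀ h ∈ H, δ * (δ * γ + 1) ^ h + γ * (δ + γ) ^ h ≠ 0) →
      (∀ h ∈ H,
        1 / (γ ^ 2 - 1) +
          γ / (δ * (γ ^ 2 - 1)) * ((δ + γ) / (δ * γ + 1)) ^ h ≠ 0) →
      δ * ∏ h ∈ H,
          (δ * γ * (δ * γ + 1) ^ h + (δ + γ) ^ h) /
            (δ * (δ * γ + 1) ^ h + γ * (δ + γ) ^ h) =
        δ / γ ^ H.card * ∏ h ∈ H,
          (1 + 1 /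
            (1 / (γ ^ 2 - 1) +
              γ / (δ * (γ ^ 2 - 1)) * ((δ + γ) / (δ * γ + 1)) ^ h)) := by
  obtain ⟨hδ₁, hδ₀, hδ₂⟩ := hδ
  obtain ⟨hγ₁, hγ₀, hγ₂⟩ := hγ
  have hγsq := sq_sub_one_ne_zero hγ₂ hγ₁
  have hsum : δ + γ ≠ 0 := fun h => hγδ (eq_neg_of_add_eq_zero_right h)
  refine ⟨one_div_ne_zero hγsq, div_ne_zero hγ₀ (mul_ne_zero hδ₀ hγsq),
    ⟨div_ne_neg_one_of_ne_neg_one hδ₁ hγ₁ hw, div_ne_zero hsum hw,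
      div_ne_one_of_ne_one hδ₂ hγ₂ hw⟩, fun H _ hden _ => ?_⟩
  have hfactor : ∀ h ∈ H, (δ * γ * (δ * γ + 1) ^ h + (δ + γ) ^ h) /
      (δ * (δ * γ + 1) ^ h + γ * (δ + γ) ^ h) =
      γ⁻¹ * (1 + 1 / (1 / (γ ^ 2 - 1) +
        γ / (δ * (γ ^ 2 - 1)) * ((δ + γ) / (δ * γ + 1)) ^ h)) := fun h hh => by
    rw [div_pow]
    exact factor_eq_inv_mul_one_add_one_div hγ₀ hδ₀ hγsq (pow_ne_zero h hw) (hden h hh)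
  rw [prod_congr rfl hfactor, prod_mul_distrib, prod_const, inv_pow, ← mul_assoc, ← div_eq_mul_inv]
end

section
/- Let γ, δ ∈ ℚ with δ ∉ {−1,0,1}, γ ∉ {−1,0,1}, γ ≠ −δ, and δγ+1 ≠ 0. Then there exists h₂ ∈ ℕ such that for every finite set H of positive integers with min H > h₂, the product Π_{h∈H} ( δ(δγ+1)^h + γ(δ+γ)^h ) is nonzero. (If δγ+1 = 0 the product is nonzero for every H of positive integers.) -/
open Finset

lemma aux_dominate (a b c d : ℚ) (hb : 0 < b) (hc : 0 < c) (hab : b < a) :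
    ∃ N : ℕ, ∀ h : ℕ, N ≤ h → d * b ^ h < c * a ^ h := by
  have ha : 0 < a := hb.trans hab
  have hr : 1 < a / b := (one_lt_div hb).mpr hab
  obtain ⟨n, hn⟩ := pow_unbounded_of_one_lt (d / c) hr
  refine ⟨n, fun h hh => ?_⟩
  have h1 : (a / b) ^ n ≤ (a / b) ^ h := pow_le_pow_right₀ hr.le hh
  have h2 : d / c < (a / b) ^ h := hn.trans_le h1
  rw [div_pow] at h2
  have hbh : (0:ℚ) < b ^ h := pow_pos hb h
  rw [div_lt_div_iff₀ hc hbh] at h2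
  linarith

theorem g_p_nonzero (γ δ : ℚ)
    (hδ : δ ≠ -1 ∧ δ ≠ 0 ∧ δ ≠ 1) (hγ : γ ≠ -1 ∧ γ ≠ 0 ∧ γ ≠ 1)
    (hγδ : γ ≠ -δ) :
    (δ * γ + 1 ≠ 0 →
      ∃ h₂ : ℕ, ∀ H : Finset ℕ, (∀ h ∈ H, 0 < h) → (∀ h ∈ H, h₂ < h) →
        ∏ h ∈ H, (δ * (δ * γ + 1) ^ h + γ * (δ + γ) ^ h) ≠ 0) ∧
    (δ * γ + 1 = 0 →
      ∀ H : Finset ℕ, (∀ h ∈ H, 0 < h) →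
        ∏ h ∈ H, (δ * (δ * γ + 1) ^ h + γ * (δ + γ) ^ h) ≠ 0) := by
  obtain ⟨hδ1, hδ0, hδ2⟩ := hδ
  obtain ⟨hγ1, hγ0, hγ2⟩ := hγ
  have hsum : δ + γ ≠ 0 := by
    intro h; apply hγδ; linarith
  constructor
  · intro hprod
    -- |δγ+1| ≠ |δ+γ|
    have habs : |δ * γ + 1| ≠ |δ + γ| := by
      intro h
      rcases abs_eq_abs.mp h with h' | h'
      · have : (δ - 1) * (γ - 1) = 0 := by ring_nf; linarith
        rcases mul_eq_zero.mp this with h'' | h''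
        · exact hδ2 (by linarith)
        · exact hγ2 (by linarith)
      · have : (δ + 1) * (γ + 1) = 0 := by ring_nf; linarith
        rcases mul_eq_zero.mp this with h'' | h''
        · exact hδ1 (by linarith)
        · exact hγ1 (by linarith)
    have ha : 0 < |δ * γ + 1| := abs_pos.mpr hprod
    have hb : 0 < |δ + γ| := abs_pos.mpr hsum
    have hcδ : 0 < |δ| := abs_pos.mpr hδ0
    have hcγ : 0 < |γ| := abs_pos.mpr hγ0
    have key : ∃ N : ℕ, ∀ h : ℕ, N ≤ h →
        |δ| * |δ * γ + 1| ^ h ≠ |γ| * |δ + γ| ^ h := by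
      rcases lt_or_gt_of_ne habs with hlt | hgt
      · obtain ⟨N, hN⟩ := aux_dominate _ _ _ _ ha hcγ hlt
        exact ⟨N, fun h hh => (hN h hh).ne⟩
      · obtain ⟨N, hN⟩ := aux_dominate _ _ _ _ hb hcδ hgt
        exact ⟨N, fun h hh => (hN h hh).ne'⟩
    obtain ⟨N, hN⟩ := key
    refine ⟨N, fun H _ hHN => ?_⟩
    rw [Finset.prod_ne_zero_iff]
    intro h hh heq
    have hle : N ≤ h := (hHN h hh).le
    apply hN h hle
    have : δ * (δ * γ + 1) ^ h = -(γ * (δ + γ) ^ h) := by linarith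
    have := congrArg abs this
    rwa [abs_neg, abs_mul, abs_mul, abs_pow, abs_pow] at this
  · intro hzero H hpos
    rw [Finset.prod_ne_zero_iff]
    intro h hh
    rw [hzero, zero_pow (hpos h hh).ne', mul_zero, zero_add]
    exact mul_ne_zero hγ0 (pow_ne_zero _ hsum)
end

section
/- Let (H, c̄) be a labeled graph with labels in [k] and let G = η_{p,r}(H) be obtained by adding all missing edges between vertices labeled p and vertices labeled r (p ≠ r). For S ⊆ V(H) with a_p vertices of label p and a_r of label r in S, and d_p, d_r total vertices of labels p and r: the number of p–r edges of G inside S is a_p·a_r, and the number of p–r edges of G inside the complement of S is (d_p − a_p)(d_r − a_r). Consequently, the coefficient t_{ā,b̄,c̄}(G) of Z_labeled(G) is zero unless b_{p,r} = a_p·a_r and c_{p,r} = (d_p − a_p)(d_r − a_r), in which case it equals the sum of coefficients t_{ā,b̄',c̄'}(H) over all b̄', c̄' agreeing with b̄, c̄ outside the index {p,r}. -/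
open Finset

/-- The number of edges of `G` inside `S` whose pair of endpoint labels is `p`. -/
def labEdges {V : Type*} [Fintype V] [DecidableEq V] {k : ℕ} (G : SimpleGraph V)
    [DecidableRel G.Adj] (c : V → Fin k) (S : Finset V) (p : Sym2 (Fin k)) : ℕ :=
  ((edgeIn G S).filter (fun e => e.map c = p)).card

/-- The coefficient `t_{ā,b̄,c̄}(G)` of the monomial
`∏ y_i^{a_i} ∏ x_{i,j}^{b_{i,j}} z_{i,j}^{c_{i,j}}` in `Z_labeled(G,c̄;x̄,ȳ,z̄)`:
the number of vertex subsets `S` whose label counts are given by `a` and whose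
labeled edge counts inside `S` (resp. inside the complement of `S`) are given by
`b` (resp. `cc`). -/
def coeffZlab {V : Type*} [Fintype V] [DecidableEq V] {k : ℕ} (G : SimpleGraph V)
    [DecidableRel G.Adj] (c : V → Fin k) (a : Fin k → ℕ) (b cc : Sym2 (Fin k) → ℕ) : ℕ :=
  (univ.filter (fun S : Finset V =>
    (∀ i : Fin k, (S.filter (fun v => c v = i)).card = a i) ∧
    (∀ p : Sym2 (Fin k), labEdges G c S p = b p) ∧
    (∀ p : Sym2 (Fin k), labEdges G c Sᶜ p = cc p))).card

/-- The clique-width operation `η_{p,r}`: add all missing edges between vertices labeled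
`p` and vertices labeled `r`. -/
def etaGraph {V : Type*} {k : ℕ} (H : SimpleGraph V) (c : V → Fin k) (p r : Fin k) :
    SimpleGraph V where
  Adj u v := u ≠ v ∧ (H.Adj u v ∨ (c u = p ∧ c v = r) ∨ (c u = r ∧ c v = p))
  symm := by
    constructor
    rintro u v ⟨h1, h2⟩
    refine ⟨h1.symm, ?_⟩
    rcases h2 with h | h | h
    · exact Or.inl h.symm
    · exact Or.inr (Or.inr ⟨h.2, h.1⟩)
    · exact Or.inr (Or.inl ⟨h.2, h.1⟩)
  loopless := by constructor; rintro u ⟨h1, _⟩; exact h1 rfl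

instance {V : Type*} [DecidableEq V] {k : ℕ} (H : SimpleGraph V) [DecidableRel H.Adj]
    (c : V → Fin k) (p r : Fin k) : DecidableRel (etaGraph H c p r).Adj := fun u v =>
  inferInstanceAs
    (Decidable (u ≠ v ∧ (H.Adj u v ∨ (c u = p ∧ c v = r) ∨ (c u = r ∧ c v = p))))

/-!
In `η_{p,r}(H)` every vertex labelled `p` is adjacent to every vertex labelled `r`, so the
`p`–`r` edges inside `S` are the pairs in `S_p × S_r` (injectively, since `p ≠ r`), and
likewise inside `Sᶜ`; all other labelled edge counts are those of `H`. Hence the `{p,r}` entries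
of `b̄, c̄` are forced by `ā`, and when they take the forced values, the sets counted by `t(G)`
are those counted by `t(H)` with the `{p,r}` entries left free, which is the sum of `t(H)` over
all values `0, …, |E(H)|` of these entries.
-/

lemma card_filter_compl {V : Type*} [Fintype V] [DecidableEq V] (S : Finset V)
    (P : V → Prop) [DecidablePred P] :
    #(Sᶜ.filter P) = #(univ.filter P) - #(S.filter P) := by
  have h : Sᶜ.filter P = univ.filter P \ S.filter P := by
    ext
    simp only [mem_filter, mem_compl, mem_sdiff, mem_univ, true_and]
    tauto
  rw [h, card_sdiff_of_subset (filter_subset_filter P (subset_univ S))]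

section LabeledEdges

variable {V : Type*} [Fintype V] [DecidableEq V] {k : ℕ}

lemma labEdges_le_card_edgeFinset (G : SimpleGraph V) [DecidableRel G.Adj] (c : V → Fin k)
    (S : Finset V) (q : Sym2 (Fin k)) : labEdges G c S q ≤ #G.edgeFinset :=
  card_le_card ((filter_subset _ _).trans (filter_subset _ _))

def CoeffSetAway (G : SimpleGraph V) [DecidableRel G.Adj] (c : V → Fin k) (q : Sym2 (Fin k))
    (a : Fin k → ℕ) (b cc : Sym2 (Fin k) → ℕ) (S : Finset V) : Prop :=
  (∀ i : Fin k, #(S.filter (fun v => c v = i)) = a i) ∧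
    (∀ q' ≠ q, labEdges G c S q' = b q') ∧ (∀ q' ≠ q, labEdges G c Sᶜ q' = cc q')

instance (G : SimpleGraph V) [DecidableRel G.Adj] (c : V → Fin k) (q : Sym2 (Fin k))
    (a : Fin k → ℕ) (b cc : Sym2 (Fin k) → ℕ) : DecidablePred (CoeffSetAway G c q a b cc) :=
  fun _ => inferInstanceAs (Decidable (_ ∧ _ ∧ _))

lemma coeffZlab_eq_card_filter_coeffSetAway (G : SimpleGraph V) [DecidableRel G.Adj]
    (c : V → Fin k) (q : Sym2 (Fin k)) (a : Fin k → ℕ) (b cc : Sym2 (Fin k) → ℕ) :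
    coeffZlab G c a b cc = #(univ.filter fun S => CoeffSetAway G c q a b cc S ∧
      labEdges G c S q = b q ∧ labEdges G c Sᶜ q = cc q) := by
  unfold coeffZlab CoeffSetAway
  congr 1
  ext S
  simp only [mem_filter, mem_univ, true_and]
  constructor
  · rintro ⟨hS, hin, hout⟩
    exact ⟨⟨hS, fun q' _ => hin q', fun q' _ => hout q'⟩, hin q, hout q⟩
  · rintro ⟨⟨hS, hin, hout⟩, hinq, houtq⟩
    exact ⟨hS, (and_forall_ne q).mp ⟨hinq, hin⟩, (and_forall_ne q).mp ⟨houtq, hout⟩⟩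

lemma coeffSetAway_update (G : SimpleGraph V) [DecidableRel G.Adj] (c : V → Fin k)
    (q : Sym2 (Fin k)) (a : Fin k → ℕ) (b cc : Sym2 (Fin k) → ℕ) (m n : ℕ) (S : Finset V) :
    CoeffSetAway G c q a (Function.update b q m) (Function.update cc q n) S ↔
      CoeffSetAway G c q a b cc S := by
  unfold CoeffSetAway
  refine and_congr Iff.rfl (and_congr ?_ ?_) <;>
    exact forall₂_congr fun q' hq' => by rw [Function.update_of_ne hq']

/-- Every `S` lies in exactly one fibre, and the range bounds all possible edge counts. -/
lemma sum_coeffZlab_update (G : SimpleGraph V) [DecidableRel G.Adj] (c : V → Fin k)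
    (q : Sym2 (Fin k)) (a : Fin k → ℕ) (b cc : Sym2 (Fin k) → ℕ) :
    ∑ m ∈ range (#G.edgeFinset + 1), ∑ n ∈ range (#G.edgeFinset + 1),
        coeffZlab G c a (Function.update b q m) (Function.update cc q n) =
      #(univ.filter (CoeffSetAway G c q a b cc)) := by
  rw [card_eq_sum_card_fiberwise (f := fun S => (labEdges G c S q, labEdges G c Sᶜ q))
    (t := range (#G.edgeFinset + 1) ×ˢ range (#G.edgeFinset + 1)), sum_product]
  · refine sum_congr rfl fun m _ => sum_congr rfl fun n _ => ?_
    rw [coeffZlab_eq_card_filter_coeffSetAway G c q, filter_filter]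
    simp only [coeffSetAway_update, Function.update_self, Prod.mk.injEq]
  · intro S _
    simp only [coe_product, coe_range, Set.mem_prod, Set.mem_Iio, Nat.lt_succ_iff]
    exact ⟨labEdges_le_card_edgeFinset G c S q, labEdges_le_card_edgeFinset G c Sᶜ q⟩

end LabeledEdges

section Eta

variable {V : Type*} {k : ℕ}

lemma etaGraph_adj (H : SimpleGraph V) (c : V → Fin k) (p r : Fin k) (u v : V) :
    (etaGraph H c p r).Adj u v ↔
      u ≠ v ∧ (H.Adj u v ∨ (c u = p ∧ c v = r) ∨ (c u = r ∧ c v = p)) := Iff.rfl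

variable [Fintype V] [DecidableEq V] (H : SimpleGraph V) [DecidableRel H.Adj] (c : V → Fin k)
  {p r : Fin k}

lemma labEdges_etaGraph_self (hpr : p ≠ r) (S : Finset V) :
    labEdges (etaGraph H c p r) c S s(p, r) =
      #(S.filter fun v => c v = p) * #(S.filter fun v => c v = r) := by
  have himg : (edgeIn (etaGraph H c p r) S).filter (fun e => e.map c = s(p, r)) =
      ((S.filter fun v => c v = p) ×ˢ (S.filter fun v => c v = r)).image
        (fun uv => s(uv.1, uv.2)) := by
    ext e
    induction e using Sym2.ind with
    | _ u v =>
      simp only [mem_filter, mem_image, mem_product, edgeIn, SimpleGraph.mem_edgeFinset,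
        SimpleGraph.mem_edgeSet, mk_mem_sym2_iff, Sym2.map_mk, Sym2.eq_iff,
        etaGraph_adj, Prod.exists]
      constructor
      · rintro ⟨⟨-, huS, hvS⟩, ⟨hu, hv⟩ | ⟨hu, hv⟩⟩
        · exact ⟨u, v, ⟨⟨huS, hu⟩, hvS, hv⟩, Or.inl ⟨rfl, rfl⟩⟩
        · exact ⟨v, u, ⟨⟨hvS, hv⟩, huS, hu⟩, Or.inr ⟨rfl, rfl⟩⟩
      · rintro ⟨x, y, ⟨⟨hxS, hxp⟩, hyS, hyr⟩, ⟨rfl, rfl⟩ | ⟨rfl, rfl⟩⟩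
        · exact ⟨⟨⟨fun h => hpr (by rw [← hxp, ← hyr, h]), Or.inr (Or.inl ⟨hxp, hyr⟩)⟩, hxS, hyS⟩,
            Or.inl ⟨hxp, hyr⟩⟩
        · exact ⟨⟨⟨fun h => hpr (by rw [← hxp, ← hyr, h]), Or.inr (Or.inr ⟨hyr, hxp⟩)⟩, hyS, hxS⟩,
            Or.inr ⟨hyr, hxp⟩⟩
  rw [labEdges, himg, card_image_of_injOn, card_product]
  rintro ⟨x, y⟩ hxy ⟨x', y'⟩ hxy' heq
  simp only [coe_product, coe_filter, Set.mem_prod, Set.mem_ofPred_eq] at hxy hxy'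
  rcases Sym2.eq_iff.mp heq with ⟨rfl, rfl⟩ | ⟨rfl, -⟩
  · rfl
  · exact absurd (hxy.1.2.symm.trans hxy'.2.2) hpr

lemma labEdges_compl_etaGraph_self (hpr : p ≠ r) (S : Finset V) :
    labEdges (etaGraph H c p r) c Sᶜ s(p, r) =
      (#(univ.filter fun v => c v = p) - #(S.filter fun v => c v = p)) *
        (#(univ.filter fun v => c v = r) - #(S.filter fun v => c v = r)) := by
  rw [labEdges_etaGraph_self H c hpr, card_filter_compl, card_filter_compl]

lemma labEdges_etaGraph_of_ne {q : Sym2 (Fin k)} (hq : q ≠ s(p, r)) (S : Finset V) :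
    labEdges (etaGraph H c p r) c S q = labEdges H c S q := by
  unfold labEdges
  congr 1
  ext e
  induction e using Sym2.ind with
  | _ u v =>
    simp only [mem_filter, edgeIn, SimpleGraph.mem_edgeFinset, SimpleGraph.mem_edgeSet,
      Sym2.map_mk, etaGraph_adj]
    constructor
    · rintro ⟨⟨⟨-, h | ⟨hu, hv⟩ | ⟨hu, hv⟩⟩, hS⟩, hmap⟩
      · exact ⟨⟨h, hS⟩, hmap⟩
      · exact absurd (by rw [← hmap, hu, hv]) hq
      · exact absurd (by rw [← hmap, hu, hv, Sym2.eq_swap]) hq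
    · rintro ⟨⟨hadj, hS⟩, hmap⟩
      exact ⟨⟨⟨hadj.ne, Or.inl hadj⟩, hS⟩, hmap⟩

lemma coeffSetAway_etaGraph_iff (a : Fin k → ℕ) (b cc : Sym2 (Fin k) → ℕ) (S : Finset V) :
    CoeffSetAway (etaGraph H c p r) c s(p, r) a b cc S ↔ CoeffSetAway H c s(p, r) a b cc S := by
  unfold CoeffSetAway
  refine and_congr Iff.rfl (and_congr ?_ ?_) <;>
    exact forall₂_congr fun q hq => by rw [labEdges_etaGraph_of_ne H c hq]

end Eta
theorem eta_coeff {V : Type*} [Fintype V] [DecidableEq V] {k : ℕ} (H : SimpleGraph V)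
    [DecidableRel H.Adj] (c : V → Fin k) (p r : Fin k) (hpr : p ≠ r) :
    (∀ S : Finset V,
      labEdges (etaGraph H c p r) c S s(p, r) =
          (S.filter (fun v => c v = p)).card * (S.filter (fun v => c v = r)).card ∧
      labEdges (etaGraph H c p r) c Sᶜ s(p, r) =
          ((univ.filter (fun v => c v = p)).card - (S.filter (fun v => c v = p)).card) *
            ((univ.filter (fun v => c v = r)).card - (S.filter (fun v => c v = r)).card)) ∧
    ∀ (a : Fin k → ℕ) (b cc : Sym2 (Fin k) → ℕ),
      ((b s(p, r) ≠ a p * a r ∨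
          cc s(p, r) ≠
            ((univ.filter (fun v => c v = p)).card - a p) *
              ((univ.filter (fun v => c v = r)).card - a r)) →
        coeffZlab (etaGraph H c p r) c a b cc = 0) ∧
      (b s(p, r) = a p * a r ∧
          cc s(p, r) =
            ((univ.filter (fun v => c v = p)).card - a p) *
              ((univ.filter (fun v => c v = r)).card - a r) →
        coeffZlab (etaGraph H c p r) c a b cc =
          ∑ m ∈ Finset.range (H.edgeFinset.card + 1),
            ∑ n ∈ Finset.range (H.edgeFinset.card + 1),
              coeffZlab H c a (Function.update b s(p, r) m)
                (Function.update cc s(p, r) n)) := by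
  refine ⟨fun S => ⟨labEdges_etaGraph_self H c hpr S, labEdges_compl_etaGraph_self H c hpr S⟩,
    fun a b cc => ?_⟩
  have forced : ∀ S : Finset V, (∀ i, #(S.filter fun v => c v = i) = a i) →
      labEdges (etaGraph H c p r) c S s(p, r) = a p * a r ∧
      labEdges (etaGraph H c p r) c Sᶜ s(p, r) =
        (#(univ.filter fun v => c v = p) - a p) * (#(univ.filter fun v => c v = r) - a r) :=
    fun S hS => by
      rw [labEdges_etaGraph_self H c hpr, labEdges_compl_etaGraph_self H c hpr, hS p, hS r]
      exact ⟨rfl, rfl⟩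
  rw [coeffZlab_eq_card_filter_coeffSetAway _ c s(p, r), sum_coeffZlab_update]
  constructor
  · intro hne
    refine card_eq_zero.mpr (filter_eq_empty_iff.mpr ?_)
    rintro S - ⟨hS, hin, hout⟩
    obtain ⟨hin', hout'⟩ := forced S hS.1
    rcases hne with hne | hne
    exacts [hne (hin.symm.trans hin'), hne (hout.symm.trans hout')]
  · rintro ⟨hb, hcc⟩
    congr 1
    refine filter_congr fun S _ => ?_
    rw [coeffSetAway_etaGraph_iff]
    exact ⟨And.left, fun h =>
      ⟨h, (forced S h.1).1.trans hb.symm, (forced S h.1).2.trans hcc.symm⟩⟩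
end
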